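/- A binary word is balanced if and only if it is both upward digitally convex and downward digitally convex. -/

import Mathlib

/-!
Balanced words have balanced factors, so merging the letters of a balanced word into its Lyndon
factorization (for either order) yields balanced factors.

Conversely, a balanced Lyndon word `l` is a lower Christoffel word: its prefix of length `i` has
`⌊i |l|₁ / |l|⌋` ones. This is proved by desubstitution: `l` avoids `00` or `11`, hence is the
image of a shorter balanced Lyndon word under one of the Christoffel morphisms `G`, `D̃`; both
preserve the Christoffel property (for `D̃`, conjugate to `G` by reversal and complement, this
follows from `G`). Lex order on lower Christoffel words compares
their slopes, so along the Lyndon factorization of an upward convex word the slopes decrease, and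
the number of ones in a prefix of length `x` lies in `(P x - 1, P x]`, where `P` is the concave
polygonal line through the ends of the factors. Hence a factor of length `m` never has more than
one more `1` than an earlier factor of length `m`; downward convexity gives the same with the
roles of the two factors exchanged, and together they give balance.
-/

/-- A word is primitive if it is not a proper power: `w = v^n` implies `n = 1`. -/
def Primitive {α : Type*} (w : List α) : Prop :=
  ∀ (v : List α) (n : ℕ), w = (List.replicate n v).flatten → n = 1

/-- A Lyndon word: nonempty and lexicographically strictly smaller than all
its proper nonempty suffixes. -/
def Lyndon {α : Type*} [LinearOrder α] (w : List α) : Prop :=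
  w ≠ [] ∧ ∀ u v : List α, w = u ++ v → u ≠ [] → v ≠ [] → List.Lex (· < ·) w v

/-- A Lyndon word for the reversed order `1 < 0` on `Bool`. -/
def LyndonRev (w : List Bool) : Prop :=
  w ≠ [] ∧ ∀ u v : List Bool, w = u ++ v → u ≠ [] → v ≠ [] → List.Lex (· > ·) w v

/-- A binary word is balanced if the numbers of `1`s in any two factors of the
same length differ by at most 1. (`false` plays the role of `0`, `true` of `1`.) -/
def Balanced01 (w : List Bool) : Prop :=
  ∀ u v : List Bool, u <:+: w → v <:+: w → u.length = v.length →
    (u.count true : ℤ) - (v.count true : ℤ) ≤ 1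

/-- `w` has period `p`: `w[i] = w[i+p]` for all valid indices. -/
def HasPeriod (w : List Bool) (p : ℕ) : Prop :=
  ∀ i : ℕ, i + p < w.length → w[i]? = w[i + p]?

/-- A central word: it has coprime periods `p`, `q` and length `p + q - 2`. -/
def Central (w : List Bool) : Prop :=
  ∃ p q : ℕ, Nat.Coprime p q ∧ HasPeriod w p ∧ HasPeriod w q ∧ w.length + 2 = p + q

/-- The lower Christoffel word of slope `b/a`: letter `i` is `1` (`true`) iff the
line `y = bx/(a+b)`... encoded via floor differences `⌊(i+1)b/(a+b)⌋ - ⌊ib/(a+b)⌋`. -/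
def chr (a b : ℕ) : List Bool :=
  List.ofFn (fun i : Fin (a + b) =>
    decide ((i : ℕ) * b / (a + b) < ((i : ℕ) + 1) * b / (a + b)))

/-- An (upward) digitally convex word: all factors of its Lyndon factorization
(for the order `0 < 1`) are balanced Lyndon words, i.e. primitive lower
Christoffel words. -/
def DC (w : List Bool) : Prop :=
  ∃ L : List (List Bool), L.flatten = w ∧ (∀ x ∈ L, Lyndon x ∧ Balanced01 x) ∧
    L.Chain' (fun a b => ¬ List.Lex (· < ·) a b)

/-- A downward digitally convex word: all factors of its Lyndon factorization
for the order `1 < 0` are balanced. -/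
def DCdown (w : List Bool) : Prop :=
  ∃ L : List (List Bool), L.flatten = w ∧ (∀ x ∈ L, LyndonRev x ∧ Balanced01 x) ∧
    L.Chain' (fun a b => ¬ List.Lex (· > ·) a b)

/-- `(u, v)` is the standard factorization of `u ++ v`: both parts nonempty and
`v` is the lexicographically least proper nonempty suffix of `u ++ v`. -/
def StdFact (u v : List Bool) : Prop :=
  u ≠ [] ∧ v ≠ [] ∧
    ∀ s : List Bool, s ≠ [] → s ≠ u ++ v → s <:+ u ++ v →
      s = v ∨ List.Lex (· < ·) v s

/-- A word is unbordered if it has no nonempty proper border. -/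
def Unbordered (w : List Bool) : Prop :=
  ∀ u : List Bool, u <+: w → u <:+ w → u ≠ w → u = []


open List

theorem exists_head_last_of_two_le_length {α : Type*} {u : List α} (h : 2 ≤ u.length) :
    ∃ a x c, u = a :: x ++ [c] := by
  obtain ⟨a, u', rfl⟩ := exists_cons_of_length_pos (by omega : 0 < u.length)
  obtain ⟨x, c, rfl⟩ := eq_nil_or_concat u' |>.resolve_left (by rintro rfl; simp at h)
  exact ⟨a, x, c, by simp⟩

section Lyndon

variable {α : Type*} [LinearOrder α]

theorem prefix_or_mismatch_of_lt {a b : List α} (h : a < b) :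
    (a <+: b ∧ a ≠ b) ∨ ∃ s x y t t', x < y ∧ a = s ++ x :: t ∧ b = s ++ y :: t' := by
  induction h with
  | nil => exact Or.inl ⟨nil_prefix, by simp⟩
  | @cons c l₁ l₂ _ ih =>
    rcases ih with ⟨hpre, hne⟩ | ⟨s, x, y, t, t', hxy, rfl, rfl⟩
    · exact Or.inl ⟨(prefix_cons_inj c).2 hpre, by simpa using hne⟩
    · exact Or.inr ⟨c :: s, x, y, t, t', hxy, rfl, rfl⟩
  | @rel x l₁ y l₂ hxy => exact Or.inr ⟨[], x, y, l₁, l₂, hxy, rfl, rfl⟩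

theorem append_lt_append_of_mismatch {s t t' c d : List α} {x y : α} (hxy : x < y) :
    s ++ x :: t ++ c < s ++ y :: t' ++ d := by
  simpa using Lex.append_left (· < ·) (Lex.rel (l₁ := t ++ c) (l₂ := t' ++ d) hxy) s

theorem Lyndon.ne_nil {w : List α} (h : Lyndon w) : w ≠ [] := h.1

theorem Lyndon.lt_of_append {w u v : List α} (h : Lyndon w) (huv : w = u ++ v) (hu : u ≠ [])
    (hv : v ≠ []) : w < v :=
  h.2 u v huv hu hv

theorem lyndon_singleton (x : α) : Lyndon [x] := by
  refine ⟨by simp, fun u v huv hu hv => absurd (congrArg length huv) ?_⟩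
  have := length_pos_of_ne_nil hu
  have := length_pos_of_ne_nil hv
  simp only [length_singleton, length_append]
  omega

theorem Lyndon.append_lt {u v : List α} (hu : Lyndon u) (hv : Lyndon v) (huv : u < v) :
    u ++ v < v := by
  rcases prefix_or_mismatch_of_lt huv with ⟨⟨r, rfl⟩, hne⟩ | ⟨s, x, y, t, t', hxy, rfl, rfl⟩
  · have hr : r ≠ [] := by rintro rfl; simp at hne
    simpa using Lex.append_left (· < ·) (hv.lt_of_append rfl hu.ne_nil hr) u
  · simpa using append_lt_append_of_mismatch (c := s ++ y :: t') (d := []) hxy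

theorem Lyndon.append {u v : List α} (hu : Lyndon u) (hv : Lyndon v) (huv : u < v) :
    Lyndon (u ++ v) := by
  refine ⟨by simp [hu.ne_nil], fun x y hxy hx hy => ?_⟩
  rcases append_eq_append_iff.1 hxy.symm with ⟨a', rfl, rfl⟩ | ⟨c', rfl, rfl⟩
  · rcases eq_or_ne a' [] with rfl | ha'
    · simpa using hu.append_lt hv huv
    rcases prefix_or_mismatch_of_lt (hu.lt_of_append rfl hx ha') with
      ⟨hpre, hne⟩ | ⟨s, x, y, t, t', hxy, hs, hs'⟩
    · exact absurd (hpre.eq_of_length (le_antisymm hpre.length_le (by simp))) hne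
    · rw [hs, hs']
      exact append_lt_append_of_mismatch hxy
  · rcases eq_or_ne c' [] with rfl | hc'
    · simpa using hu.append_lt hv huv
    · exact lt_trans (hu.append_lt hv huv) (hv.lt_of_append rfl hc' hy)

theorem Lyndon.of_flatMap {β : Type*} [LinearOrder β] {f : β → List α}
    (hf : ∀ b, f b ≠ []) (hmono : StrictMono fun x : List β => x.flatMap f) {x : List β}
    (hx : x ≠ []) (h : Lyndon (x.flatMap f)) : Lyndon x := by
  refine ⟨hx, fun u v huv hu hv => hmono.lt_iff_lt.1 ?_⟩
  have hne : ∀ y : List β, y ≠ [] → y.flatMap f ≠ [] := by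
    intro y hy
    obtain ⟨b, y, rfl⟩ := exists_cons_of_ne_nil hy
    simp [hf b]
  exact h.lt_of_append (by rw [huv, flatMap_append]) (hne u hu) (hne v hv)

theorem exists_lyndon_merge (L : List (List α)) (hL : ∀ x ∈ L, Lyndon x) :
    ∃ M : List (List α), M.flatten = L.flatten ∧ (∀ x ∈ M, Lyndon x) ∧
      M.IsChain (fun a b => ¬ a < b) := by
  induction hn : L.length using Nat.strong_induction_on generalizing L with
  | _ n ih =>
  by_cases hch : L.IsChain (fun a b => ¬ a < b)
  · exact ⟨L, rfl, hL, hch⟩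
  obtain ⟨a, b, ⟨A, B, rfl⟩, hab⟩ : ∃ a b, (∃ A B, L = A ++ a :: b :: B) ∧ a < b := by
    simpa [isChain_iff_forall_rel_of_append_cons_cons] using hch
  have hmerged : ∀ x ∈ A ++ (a ++ b) :: B, Lyndon x := by
    simp only [mem_append, mem_cons]
    rintro x (hx | rfl | hx)
    · exact hL x (by simp [hx])
    · exact (hL a (by simp)).append (hL b (by simp)) hab
    · exact hL x (by simp [hx])
  obtain ⟨M, hM, hMl, hMc⟩ := ih _ (by simp [← hn]) _ hmerged rfl
  exact ⟨M, by simp [hM], hMl, hMc⟩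

end Lyndon

section Complement

theorem lex_map_of_rel {α β : Type*} {r : α → α → Prop} {s : β → β → Prop} (f : α → β)
    (hf : ∀ a b, r a b → s (f a) (f b)) {u v : List α} (h : Lex r u v) :
    Lex s (u.map f) (v.map f) := by
  induction h with
  | nil => exact Lex.nil
  | cons _ ih => exact Lex.cons ih
  | rel hab => exact Lex.rel (hf _ _ hab)

@[simp] theorem not_comp_not : not ∘ not = id :=
  Bool.involutive_not.comp_self

theorem count_true_map_not (w : List Bool) : (w.map not).count true = w.count false :=
  count_map_of_injective w not (fun _ _ => Bool.not_inj) false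

theorem lex_gt_iff_map_not_lt {u v : List Bool} :
    Lex (· > ·) u v ↔ u.map not < v.map not := by
  refine ⟨lex_map_of_rel not (by decide), fun h => ?_⟩
  simpa using lex_map_of_rel (s := (· > ·)) not (by decide) h

theorem lyndonRev_iff_lyndon_map_not {w : List Bool} : LyndonRev w ↔ Lyndon (w.map not) := by
  constructor
  · refine fun ⟨hne, h⟩ => ⟨by simpa using hne, fun u v huv hu hv => ?_⟩
    have hw : w = u.map not ++ v.map not := by simpa using congrArg (map not) huv
    simpa using lex_gt_iff_map_not_lt.1 (h _ _ hw (by simpa using hu) (by simpa using hv))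
  · refine fun ⟨hne, h⟩ => ⟨by simpa using hne, fun u v huv hu hv => ?_⟩
    exact lex_gt_iff_map_not_lt.2
      (h (u.map not) (v.map not) (by simp [huv]) (by simpa using hu) (by simpa using hv))

theorem Balanced01.of_infix {w u : List Bool} (h : Balanced01 w) (hu : u <:+: w) :
    Balanced01 u :=
  fun a b ha hb hl => h a b (ha.trans hu) (hb.trans hu) hl

theorem Balanced01.map_not {w : List Bool} (h : Balanced01 w) : Balanced01 (w.map not) := by
  intro u v hu hv hlen
  obtain ⟨u', hu', rfl⟩ := infix_map_iff.1 hu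
  obtain ⟨v', hv', rfl⟩ := infix_map_iff.1 hv
  have hb := h v' u' hv' hu' (by simpa using hlen.symm)
  have := count_true_add_count_false u'
  have := count_true_add_count_false v'
  simp only [length_map] at hlen
  rw [count_true_map_not, count_true_map_not]
  omega

theorem Balanced01.reverse {w : List Bool} (h : Balanced01 w) : Balanced01 w.reverse := by
  intro u v hu hv hlen
  simpa using h u.reverse v.reverse (by simpa using reverse_infix.2 hu)
    (by simpa using reverse_infix.2 hv) (by simpa using hlen)

theorem dcDown_iff_dc_map_not {w : List Bool} : DCdown w ↔ DC (w.map not) := by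
  have hchain : ∀ a b : List Bool,
      ¬ Lex (· > ·) a b ↔ ¬ a.map not < b.map not := fun _ _ => not_congr lex_gt_iff_map_not_lt
  constructor
  · rintro ⟨L, rfl, hL, hc⟩
    refine ⟨L.map (map not), by simp [map_flatten], ?_, ?_⟩
    · simp only [mem_map, forall_exists_index, and_imp, forall_apply_eq_imp_iff₂]
      exact fun x hx => ⟨lyndonRev_iff_lyndon_map_not.1 (hL x hx).1, (hL x hx).2.map_not⟩
    · exact isChain_map_of_isChain _ (fun a b => (hchain a b).1) hc
  · rintro ⟨L, hL, hM, hc⟩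
    refine ⟨L.map (map not), by rw [← map_flatten, hL]; simp, ?_, ?_⟩
    · simp only [mem_map, forall_exists_index, and_imp, forall_apply_eq_imp_iff₂]
      exact fun x hx => ⟨lyndonRev_iff_lyndon_map_not.2 (by simpa using (hM x hx).1),
        (hM x hx).2.map_not⟩
    · refine isChain_map_of_isChain _ (fun a b hab => (hchain _ _).2 ?_) hc
      simpa using hab

end Complement

theorem Balanced01.dc {w : List Bool} (h : Balanced01 w) : DC w := by
  obtain ⟨M, hM, hMl, hMc⟩ := exists_lyndon_merge (w.map ([·]))
    (by simp only [mem_map]; rintro _ ⟨c, -, rfl⟩; exact lyndon_singleton c)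
  have hflat : M.flatten = w := by simpa [← flatMap_def] using hM
  exact ⟨M, hflat, fun x hx => ⟨hMl x hx, h.of_infix (hflat ▸ infix_of_mem_flatten hx)⟩, hMc⟩

theorem Balanced01.dcDown {w : List Bool} (h : Balanced01 w) : DCdown w :=
  dcDown_iff_dc_map_not.2 h.map_not.dc

section Unbalanced

theorem exists_shorter_gap_of_ne {x y : List Bool} (hlen : x.length = y.length)
    (hc : y.count true ≤ x.count true) (hne : x ≠ y) :
    ∃ u v : List Bool, u <:+: true :: x ++ [true] ∧ v <:+: false :: y ++ [false] ∧
      u.length = v.length ∧ u.length < x.length + 2 ∧ v.count true + 2 ≤ u.count true := by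
  rcases lt_or_gt_of_ne hne with hlt | hlt
  · obtain ⟨hpre, hne⟩ | ⟨e, p, q, f, f', hpq, rfl, rfl⟩ := prefix_or_mismatch_of_lt hlt
    · exact absurd (hpre.eq_of_length hlen) hne
    obtain ⟨rfl, rfl⟩ := Bool.lt_iff.1 hpq
    refine ⟨f ++ [true], f' ++ [false], ⟨true :: e ++ [false], [], by simp⟩,
      ⟨false :: e ++ [true], [], by simp⟩, by simp at hlen ⊢; omega, by simp; omega, ?_⟩
    simp [count_append] at hc ⊢
    omega
  · obtain ⟨hpre, hne⟩ | ⟨e, p, q, f', f, hpq, rfl, rfl⟩ := prefix_or_mismatch_of_lt hlt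
    · exact absurd (hpre.eq_of_length hlen.symm) hne
    obtain ⟨rfl, rfl⟩ := Bool.lt_iff.1 hpq
    exact ⟨true :: e ++ [true], false :: e ++ [false], ⟨[], f ++ [true], by simp⟩,
      ⟨[], f' ++ [false], by simp⟩, by simp, by simp, by simp⟩

-- A shortest pair of factors with `2` more ones in the first one has the form `1t1`, `0t0`.
theorem exists_pair_of_count_gap {w : List Bool} (m : ℕ) :
    ∀ u v : List Bool, u <:+: w → v <:+: w → u.length = m → v.length = m →
      v.count true + 2 ≤ u.count true →
      ∃ t, false :: t ++ [false] <:+: w ∧ true :: t ++ [true] <:+: w := by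
  induction m using Nat.strong_induction_on with
  | _ m ih =>
  intro u v hu hv hum hvm hgap
  have hshort : ∀ u' v' : List Bool, u' <:+: u → v' <:+: v → u'.length = v'.length →
      u'.length < m → v'.count true + 2 ≤ u'.count true →
      ∃ t, false :: t ++ [false] <:+: w ∧ true :: t ++ [true] <:+: w :=
    fun u' v' hu' hv' hlen hlt hgap' =>
      ih _ hlt u' v' (hu'.trans hu) (hv'.trans hv) rfl hlen.symm hgap'
  have hm : 2 ≤ m := by have := count_le_length (a := true) (l := u); omega
  obtain ⟨a, x, c, rfl⟩ := exists_head_last_of_two_le_length (hum ▸ hm)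
  obtain ⟨b, y, d, rfl⟩ := exists_head_last_of_two_le_length (hvm ▸ hm)
  simp only [length_append, length_cons, length_nil] at hum hvm
  by_cases hab : a = true ∧ b = false
  swap
  · exact hshort (x ++ [c]) (y ++ [d]) ((suffix_cons _ _).isInfix) ((suffix_cons _ _).isInfix)
      (by simp; omega) (by simp; omega)
      (by cases a <;> cases b <;> simp [count_cons, count_append] at hab hgap ⊢ <;> omega)
  by_cases hcd : c = true ∧ d = false
  swap
  · exact hshort (a :: x) (b :: y) ((prefix_append _ _).isInfix) ((prefix_append _ _).isInfix)
      (by simp; omega) (by simp; omega)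
      (by cases c <;> cases d <;> simp [count_cons, count_append] at hcd hgap ⊢ <;> omega)
  obtain ⟨rfl, rfl⟩ := hab
  obtain ⟨rfl, rfl⟩ := hcd
  by_cases hxy : x = y
  · subst hxy
    exact ⟨x, hv, hu⟩
  obtain ⟨u', v', hu', hv', hlen, hlt, hgap'⟩ := exists_shorter_gap_of_ne (by omega)
    (by simp [count_append] at hgap; omega) hxy
  exact hshort u' v' hu' hv' hlen (by omega) hgap'

theorem exists_pair_of_not_balanced {w : List Bool} (h : ¬ Balanced01 w) :
    ∃ t, false :: t ++ [false] <:+: w ∧ true :: t ++ [true] <:+: w := by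
  simp only [Balanced01, not_forall] at h
  obtain ⟨u, v, hu, hv, hlen, hgap⟩ := h
  exact exists_pair_of_count_gap _ u v hu hv rfl hlen.symm (by omega)

end Unbalanced

section Morphisms

def morphG (x : List Bool) : List Bool :=
  x.flatMap fun b => if b then [false, true] else [false]

def morphD (x : List Bool) : List Bool :=
  x.flatMap fun b => if b then [true] else [false, true]

def revCompl (w : List Bool) : List Bool :=
  (w.map not).reverse

@[simp] theorem morphG_nil : morphG [] = [] := rfl
@[simp] theorem morphG_cons_false (x : List Bool) : morphG (false :: x) = false :: morphG x := rfl
@[simp] theorem morphG_cons_true (x : List Bool) :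
    morphG (true :: x) = false :: true :: morphG x := rfl
@[simp] theorem morphG_append (x y : List Bool) : morphG (x ++ y) = morphG x ++ morphG y := by
  simp [morphG]

@[simp] theorem morphD_nil : morphD [] = [] := rfl
@[simp] theorem morphD_cons_false (x : List Bool) :
    morphD (false :: x) = false :: true :: morphD x := rfl
@[simp] theorem morphD_cons_true (x : List Bool) : morphD (true :: x) = true :: morphD x := rfl
@[simp] theorem morphD_append (x y : List Bool) : morphD (x ++ y) = morphD x ++ morphD y := by
  simp [morphD]

@[simp] theorem revCompl_nil : revCompl [] = [] := rfl
@[simp] theorem revCompl_cons (b : Bool) (w : List Bool) :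
    revCompl (b :: w) = revCompl w ++ [!b] := by
  simp [revCompl]
@[simp] theorem revCompl_append (u v : List Bool) :
    revCompl (u ++ v) = revCompl v ++ revCompl u := by
  simp [revCompl]
@[simp] theorem revCompl_revCompl (w : List Bool) : revCompl (revCompl w) = w := by
  simp [revCompl, map_reverse]
@[simp] theorem length_revCompl (w : List Bool) : (revCompl w).length = w.length := by
  simp [revCompl]
@[simp] theorem count_true_revCompl (w : List Bool) : (revCompl w).count true = w.count false := by
  simp [revCompl, count_true_map_not]

theorem revCompl_morphG (x : List Bool) : revCompl (morphG x) = morphD (revCompl x) := by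
  induction x with
  | nil => rfl
  | cons b x ih => cases b <;> simp [ih]

theorem revCompl_morphD (x : List Bool) : revCompl (morphD x) = morphG (revCompl x) := by
  simpa using (congrArg revCompl (revCompl_morphG (revCompl x))).symm

theorem revCompl_infix_revCompl {u w : List Bool} (h : u <:+: w) : revCompl u <:+: revCompl w := by
  obtain ⟨s, t, rfl⟩ := h
  exact ⟨revCompl t, revCompl s, by simp⟩

theorem balanced01_revCompl {w : List Bool} (h : Balanced01 w) : Balanced01 (revCompl w) :=
  h.map_not.reverse

theorem count_true_morphG (x : List Bool) : (morphG x).count true = x.count true := by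
  induction x with
  | nil => rfl
  | cons b x ih => cases b <;> simp [ih]

theorem count_false_morphG (x : List Bool) : (morphG x).count false = x.length := by
  induction x with
  | nil => rfl
  | cons b x ih => cases b <;> simp [ih]

theorem length_morphG (x : List Bool) : (morphG x).length = x.length + x.count true := by
  rw [← count_true_add_count_false, count_true_morphG, count_false_morphG]
  omega

theorem count_true_morphD (x : List Bool) : (morphD x).count true = x.length := by
  induction x with
  | nil => rfl
  | cons b x ih => cases b <;> simp [ih]

theorem morphG_strictMono : StrictMono morphG := by
  intro x y h
  induction h with
  | nil => cases ‹Bool› <;> exact Lex.nil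
  | @cons a _ _ _ ih =>
    cases a
    · exact Lex.cons ih
    · exact Lex.cons (Lex.cons ih)
  | @rel a l₁ b l₂ hab =>
    obtain ⟨rfl, rfl⟩ := Bool.lt_iff.1 hab
    refine Lex.cons ?_
    rcases l₁ with _ | ⟨c, l₁⟩
    · exact Lex.nil
    · cases c <;> exact Lex.rel (by decide)

theorem morphD_strictMono : StrictMono morphD := by
  intro x y h
  induction h with
  | nil => cases ‹Bool› <;> exact Lex.nil
  | @cons a _ _ _ ih =>
    cases a
    · exact Lex.cons (Lex.cons ih)
    · exact Lex.cons ih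
  | @rel a l₁ b l₂ hab =>
    obtain ⟨rfl, rfl⟩ := Bool.lt_iff.1 hab
    exact Lex.rel (by decide)

theorem morphG_infix_morphG {u x : List Bool} (h : u <:+: x) : morphG u <:+: morphG x := by
  obtain ⟨s, t, rfl⟩ := h
  exact ⟨morphG s, morphG t, by simp⟩

end Morphisms

section Desubstitution

theorem Lyndon.of_morphG {x : List Bool} (hx : x ≠ []) (h : Lyndon (morphG x)) : Lyndon x :=
  Lyndon.of_flatMap (by decide) morphG_strictMono hx h

theorem Lyndon.of_morphD {x : List Bool} (hx : x ≠ []) (h : Lyndon (morphD x)) : Lyndon x :=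
  Lyndon.of_flatMap (by decide) morphD_strictMono hx h

theorem Lyndon.eq_false_cons_append_true {l : List Bool} (h : Lyndon l) (hl : 2 ≤ l.length) :
    ∃ m, l = false :: m ++ [true] := by
  obtain ⟨a, m, c, rfl⟩ := exists_head_last_of_two_le_length hl
  have hlt : a :: m ++ [c] < [c] := h.lt_of_append (u := a :: m) rfl (by simp) (by simp)
  cases hlt with
  | cons h' => exact absurd h' (by simp)
  | rel hac =>
    obtain ⟨rfl, rfl⟩ := Bool.lt_iff.1 hac
    exact ⟨m, rfl⟩

theorem exists_morphG_of_not_infix {l : List Bool} (h : ¬ [true, true] <:+: l) :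
    ∃ x, l = morphG x ∨ l = true :: morphG x := by
  induction l with
  | nil => exact ⟨[], Or.inl rfl⟩
  | cons a l ih =>
    obtain ⟨x, rfl | rfl⟩ := ih (fun h' => h (h'.trans (suffix_cons a l).isInfix))
    · cases a
      · exact ⟨false :: x, Or.inl rfl⟩
      · exact ⟨x, Or.inr rfl⟩
    · cases a
      · exact ⟨true :: x, Or.inl rfl⟩
      · exact absurd ⟨[], morphG x, rfl⟩ h

theorem exists_morphD_of_not_infix {l : List Bool} (h : ¬ [false, false] <:+: l) :
    ∃ x, l = morphD x ∨ l = morphD x ++ [false] := by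
  obtain ⟨y, hy | hy⟩ := exists_morphG_of_not_infix (l := revCompl l)
    (fun h' => h (by simpa using revCompl_infix_revCompl h'))
  · exact ⟨revCompl y, Or.inl (by simpa [revCompl_morphG] using congrArg revCompl hy)⟩
  · exact ⟨revCompl y, Or.inr (by simpa [revCompl_morphG] using congrArg revCompl hy)⟩

theorem exists_prefix_of_prefix_morphG {q x : List Bool} (h : q <+: morphG x) :
    ∃ u, u <+: x ∧ (q = morphG u ∨ q = morphG u ++ [false]) := by
  induction x generalizing q with
  | nil => exact ⟨[], nil_prefix, Or.inl (prefix_nil.1 h)⟩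
  | cons a x ih =>
    cases a
    · rcases prefix_cons_iff.1 h with rfl | ⟨q', rfl, hq'⟩
      · exact ⟨[], nil_prefix, Or.inl rfl⟩
      obtain ⟨u, hu, hq⟩ := ih hq'
      exact ⟨false :: u, (prefix_cons_inj _).2 hu, by rcases hq with rfl | rfl <;> simp⟩
    · rcases prefix_cons_iff.1 h with rfl | ⟨q', rfl, hq'⟩
      · exact ⟨[], nil_prefix, Or.inl rfl⟩
      rcases prefix_cons_iff.1 hq' with rfl | ⟨q'', rfl, hq''⟩
      · exact ⟨[], nil_prefix, Or.inr rfl⟩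
      obtain ⟨u, hu, hq⟩ := ih hq''
      exact ⟨true :: u, (prefix_cons_inj _).2 hu, by rcases hq with rfl | rfl <;> simp⟩

-- An unbalanced pair `0t0`, `1t1` of `x` gives the unbalanced pair `0G(t)00`, `1G(t)01` of `G x`;
-- the last `0` of the former comes from the letter that follows `0t0` in `x`.
theorem Balanced01.of_morphG {x : List Bool} (h : Balanced01 (morphG x)) (hx : ¬ [false] <:+ x) :
    Balanced01 x := by
  by_contra hb
  obtain ⟨t, ⟨e, f, hx0⟩, hx1⟩ := exists_pair_of_not_balanced hb
  obtain ⟨b, f, rfl⟩ := exists_cons_of_ne_nil (show f ≠ [] by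
    rintro rfl
    exact hx ⟨e ++ false :: t, by simp [← hx0]⟩)
  have h0 : false :: morphG t ++ [false, false] <:+: morphG x := by
    refine IsInfix.trans ?_ (morphG_infix_morphG
      (show false :: t ++ [false, b] <:+: x from ⟨e, f, by rw [← hx0]; simp⟩))
    exact (show false :: morphG t ++ [false, false] <+: morphG (false :: t ++ [false, b]) from
      by cases b <;> simp).isInfix
  have h1 : true :: morphG t ++ [false, true] <:+: morphG x := by
    refine IsInfix.trans ?_ (morphG_infix_morphG hx1)
    exact ⟨[false], [], by simp⟩
  have := h _ _ h1 h0 (by simp)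
  simp [count_true_morphG] at this
  omega

theorem Balanced01.of_morphD {x : List Bool} (h : Balanced01 (morphD x)) (hx : ¬ [true] <+: x) :
    Balanced01 x := by
  have hrc : ¬ [false] <:+ revCompl x := by
    rintro ⟨s, hs⟩
    exact hx ⟨revCompl s, by simpa using congrArg revCompl hs⟩
  have := balanced01_revCompl ((revCompl_morphD x ▸ balanced01_revCompl h).of_morphG hrc)
  rwa [revCompl_revCompl] at this

end Desubstitution

section Christoffel

/-- The prefix of length `i` of `l` contains `⌊i |l|₁ / |l|⌋` ones: `l` is the lower Christoffel
word of slope `|l|₁ / |l|₀`. -/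
def IsLowerChristoffel (l : List Bool) : Prop :=
  ∀ i ≤ l.length, (l.take i).count true * l.length ≤ i * l.count true ∧
    i * l.count true < ((l.take i).count true + 1) * l.length

theorem isLowerChristoffel_morphG {x : List Bool} (hx : IsLowerChristoffel x) :
    IsLowerChristoffel (morphG x) := by
  intro k hk
  obtain ⟨u, hu, hq⟩ := exists_prefix_of_prefix_morphG (take_prefix k (morphG x))
  obtain ⟨h1, h2⟩ := hx u.length hu.length_le
  rw [← prefix_iff_eq_take.1 hu] at h1 h2
  have hk' : ((morphG x).take k).length = k := length_take_of_le hk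
  rw [length_morphG, count_true_morphG]
  rcases hq with hq | hq <;> rw [hq] at hk' ⊢
  · rw [length_morphG] at hk'
    rw [count_true_morphG, ← hk']
    constructor <;> nlinarith
  · simp only [length_append, length_morphG, length_singleton] at hk'
    rw [count_append, count_true_morphG, ← hk', show [false].count true = 0 from rfl, add_zero]
    constructor <;> nlinarith

theorem isLowerChristoffel_revCompl {l : List Bool} (hl : IsLowerChristoffel l) :
    IsLowerChristoffel (revCompl l) := by
  intro i hi
  rw [length_revCompl] at hi ⊢
  have htake : (revCompl l).take i = revCompl (l.drop (l.length - i)) := by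
    simp [revCompl, take_reverse, map_drop]
  obtain ⟨h1, h2⟩ := hl (l.length - i) (by omega)
  have hp : (l.take (l.length - i)).count true + (l.drop (l.length - i)).count true =
      l.count true := by rw [← count_append, take_append_drop]
  have hd : (l.drop (l.length - i)).count true + (l.drop (l.length - i)).count false = i := by
    rw [count_true_add_count_false, length_drop]; omega
  have hn := count_true_add_count_false l
  have hj : l.length - i + i = l.length := by omega
  rw [htake, count_true_revCompl, count_true_revCompl]
  -- the prefix of length `i` of `revCompl l` has `i - |l|₁ + (l.take (|l| - i)).count true` ones
  clear htake hl
  generalize (l.take (l.length - i)).count true = c at *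
  generalize (l.drop (l.length - i)).count true = d at *
  generalize (l.drop (l.length - i)).count false = c' at *
  generalize l.length - i = j at *
  generalize l.count true = p at *
  generalize l.count false = p' at *
  generalize l.length = n at *
  subst hp hd hn
  constructor <;> nlinarith [congrArg (· * (c + d)) hj]

theorem isLowerChristoffel_morphD {x : List Bool} (hx : IsLowerChristoffel x) :
    IsLowerChristoffel (morphD x) := by
  simpa [revCompl_morphG] using
    isLowerChristoffel_revCompl (isLowerChristoffel_morphG (isLowerChristoffel_revCompl hx))

theorem isLowerChristoffel_singleton (c : Bool) : IsLowerChristoffel [c] := by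
  intro i hi
  simp only [length_singleton] at hi
  interval_cases i <;> cases c <;> decide

theorem Lyndon.exists_eq_morphG {l : List Bool} (hl : Lyndon l) (hb : Balanced01 l)
    (h2 : 2 ≤ l.length) (h11 : ¬ [true, true] <:+: l) :
    ∃ x, l = morphG x ∧ Lyndon x ∧ Balanced01 x ∧ x.length < l.length := by
  obtain ⟨m, hm⟩ := hl.eq_false_cons_append_true h2
  obtain ⟨x, rfl | rfl⟩ := exists_morphG_of_not_infix h11
  swap
  · simp at hm
  have hxne : x ≠ [] := by rintro rfl; simp at hm
  refine ⟨x, rfl, hl.of_morphG hxne, hb.of_morphG ?_, ?_⟩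
  · rintro ⟨r, rfl⟩
    simpa using congrArg reverse hm
  · have : 0 < (morphG x).count true := count_pos_iff.2 (hm ▸ by simp)
    have := count_true_add_count_false (morphG x)
    rw [count_false_morphG] at this
    omega

theorem Lyndon.exists_eq_morphD {l : List Bool} (hl : Lyndon l) (hb : Balanced01 l)
    (h2 : 2 ≤ l.length) (h00 : ¬ [false, false] <:+: l) :
    ∃ x, l = morphD x ∧ Lyndon x ∧ Balanced01 x ∧ x.length < l.length := by
  obtain ⟨m, hm⟩ := hl.eq_false_cons_append_true h2
  obtain ⟨x, rfl | rfl⟩ := exists_morphD_of_not_infix h00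
  swap
  · simpa using congrArg reverse hm
  have hxne : x ≠ [] := by rintro rfl; simp at hm
  refine ⟨x, rfl, hl.of_morphD hxne, hb.of_morphD ?_, ?_⟩
  · rintro ⟨r, rfl⟩
    simp at hm
  · have : 0 < (morphD x).count false := count_pos_iff.2 (hm ▸ by simp)
    have := count_true_add_count_false (morphD x)
    rw [count_true_morphD] at this
    omega

theorem Lyndon.isLowerChristoffel {l : List Bool} (hl : Lyndon l) (hb : Balanced01 l) :
    IsLowerChristoffel l := by
  induction hn : l.length using Nat.strong_induction_on generalizing l with
  | _ n ih =>
  subst hn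
  rcases Nat.lt_or_ge l.length 2 with h2 | h2
  · have := length_pos_of_ne_nil hl.ne_nil
    obtain ⟨c, rfl⟩ := length_eq_one_iff.1 (show l.length = 1 by omega)
    exact isLowerChristoffel_singleton c
  by_cases h11 : [true, true] <:+: l
  · have h00 : ¬ [false, false] <:+: l := fun h00 => by simpa using hb _ _ h11 h00 rfl
    obtain ⟨x, rfl, hxl, hxb, hlt⟩ := hl.exists_eq_morphD hb h2 h00
    exact isLowerChristoffel_morphD (ih _ hlt hxl hxb rfl)
  · obtain ⟨x, rfl, hxl, hxb, hlt⟩ := hl.exists_eq_morphG hb h2 h11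
    exact isLowerChristoffel_morphG (ih _ hlt hxl hxb rfl)

end Christoffel

section Polyline

theorem IsLowerChristoffel.length_pos {l : List Bool} (hl : IsLowerChristoffel l) :
    0 < l.length := by
  simpa using (hl 0 (Nat.zero_le _)).2

theorem IsLowerChristoffel.count_mul_le_of_lt {a b : List Bool} (ha : IsLowerChristoffel a)
    (hb : IsLowerChristoffel b) (h : b < a) :
    b.count true * a.length ≤ a.count true * b.length := by
  rcases prefix_or_mismatch_of_lt h with ⟨⟨r, rfl⟩, -⟩ | ⟨s, x, y, t, t', hxy, rfl, rfl⟩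
  · simpa [mul_comm] using (ha b.length (by simp)).1
  obtain ⟨rfl, rfl⟩ := Bool.lt_iff.1 hxy
  have hb' := (hb (s.length + 1) (by simp)).2
  have ha' := (ha (s.length + 1) (by simp)).1
  have hs : s.take (s.length + 1) = s := take_of_length_le (by omega)
  rw [show ((s ++ false :: t).take (s.length + 1)).count true = s.count true by
    simp [take_append, hs]] at hb'
  rw [show ((s ++ true :: t').take (s.length + 1)).count true = s.count true + 1 by
    simp [take_append, hs]] at ha'
  generalize s ++ false :: t = b at *
  generalize s ++ true :: t' = a at *
  have key : (s.length + 1) * (b.count true * a.length) <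
      (s.length + 1) * (a.count true * b.length) :=
    calc (s.length + 1) * (b.count true * a.length)
        = (s.length + 1) * b.count true * a.length := by ring
      _ < (s.count true + 1) * b.length * a.length :=
          Nat.mul_lt_mul_of_pos_right hb' ha.length_pos
      _ = (s.count true + 1) * a.length * b.length := by ring
      _ ≤ (s.length + 1) * a.count true * b.length := Nat.mul_le_mul_right _ ha'
      _ = (s.length + 1) * (a.count true * b.length) := by ring
  exact (Nat.lt_of_mul_lt_mul_left key).le

noncomputable def density (l : List Bool) : ℚ := l.count true / l.length

theorem density_nonneg (l : List Bool) : 0 ≤ density l := by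
  unfold density; positivity

theorem density_le_density_of_le {a b : List Bool} (ha : IsLowerChristoffel a)
    (hb : IsLowerChristoffel b) (h : b ≤ a) : density b ≤ density a := by
  rcases h.lt_or_eq with h | rfl
  · have hna : (0 : ℚ) < a.length := by exact_mod_cast ha.length_pos
    have hnb : (0 : ℚ) < b.length := by exact_mod_cast hb.length_pos
    rw [density, density, div_le_div_iff₀ hnb hna]
    exact_mod_cast ha.count_mul_le_of_lt hb h
  · exact le_rfl

/-- The slope, at abscissa `x`, of the polygonal line through the points `(|l₁⋯lₖ|, |l₁⋯lₖ|₁)`. -/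
noncomputable def slopeAt : List (List Bool) → ℕ → ℚ
  | [], _ => 0
  | l :: L, x => if x < l.length then density l else slopeAt L (x - l.length)

noncomputable def polyline (L : List (List Bool)) (x : ℕ) : ℚ :=
  ∑ u ∈ Finset.range x, slopeAt L u

theorem slopeAt_le {L : List (List Bool)} {c : ℚ} (hc : 0 ≤ c) (hL : ∀ l ∈ L, density l ≤ c)
    (x : ℕ) : slopeAt L x ≤ c := by
  induction L generalizing x with
  | nil => exact hc
  | cons l L ih =>
    rw [slopeAt]
    split_ifs
    · exact hL l (by simp)
    · exact ih (fun m hm => hL m (by simp [hm])) _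

theorem antitone_slopeAt {L : List (List Bool)} (hL : L.Pairwise fun a b => density b ≤ density a) :
    Antitone (slopeAt L) := by
  induction L with
  | nil => exact fun _ _ _ => le_rfl
  | cons l L ih =>
    rw [pairwise_cons] at hL
    intro x y hxy
    simp only [slopeAt]
    split_ifs with hy hx hx
    · exact le_rfl
    · omega
    · exact slopeAt_le (density_nonneg l) hL.1 _
    · exact ih hL.2 (by omega)

theorem polyline_add_sub_le {L : List (List Bool)}
    (hL : L.Pairwise fun a b => density b ≤ density a) {x y : ℕ} (hxy : x ≤ y) (m : ℕ) :
    polyline L (y + m) - polyline L y ≤ polyline L (x + m) - polyline L x := by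
  simp only [polyline, Finset.sum_range_add, add_sub_cancel_left]
  exact Finset.sum_le_sum fun u _ => antitone_slopeAt hL (by omega)

theorem polyline_cons_of_le {l : List Bool} (L : List (List Bool)) {x : ℕ} (hx : x ≤ l.length) :
    polyline (l :: L) x = x * density l := by
  have hslope : ∀ u ∈ Finset.range x, slopeAt (l :: L) u = density l := fun u hu => by
    simp [slopeAt, show u < l.length by simp at hu; omega]
  simp [polyline, Finset.sum_congr rfl hslope]

theorem polyline_cons_length_add {l : List Bool} (hl : l ≠ []) (L : List (List Bool)) (m : ℕ) :
    polyline (l :: L) (l.length + m) = l.count true + polyline L m := by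
  have hn : (l.length : ℚ) ≠ 0 := by simpa using hl
  rw [polyline, Finset.sum_range_add, ← polyline, polyline_cons_of_le L le_rfl, density,
    mul_div_cancel₀ _ hn]
  simp [polyline, slopeAt]

theorem count_take_le_polyline {L : List (List Bool)} (hL : ∀ l ∈ L, IsLowerChristoffel l)
    {x : ℕ} (hx : x ≤ L.flatten.length) :
    ((L.flatten.take x).count true : ℚ) ≤ polyline L x ∧
      polyline L x < (L.flatten.take x).count true + 1 := by
  induction L generalizing x with
  | nil => simp_all [polyline]
  | cons l L ih =>
    have hl := hL l (by simp)
    have hn : (0 : ℚ) < l.length := by exact_mod_cast hl.length_pos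
    rcases Nat.lt_or_ge x l.length with hxl | hxl
    · obtain ⟨h1, h2⟩ := hl x hxl.le
      rw [polyline_cons_of_le L hxl.le, flatten_cons, take_append_of_le_length hxl.le, density,
        ← mul_div_assoc, le_div_iff₀ hn, div_lt_iff₀ hn]
      exact ⟨by exact_mod_cast h1, by exact_mod_cast h2⟩
    · obtain ⟨m, rfl⟩ := Nat.exists_eq_add_of_le hxl
      obtain ⟨h1, h2⟩ := ih (x := m) (fun l hl => hL l (by simp [hl]))
        (by simp only [flatten_cons, length_append] at hx; omega)
      rw [polyline_cons_length_add (ne_nil_of_length_pos hl.length_pos), flatten_cons,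
        take_length_add_append, count_append]
      push_cast
      constructor <;> linarith

end Polyline

theorem DC.count_take_add_le {w : List Bool} (h : DC w) {i j m : ℕ} (hij : i ≤ j)
    (hjm : j + m ≤ w.length) :
    (w.take (j + m)).count true + (w.take i).count true ≤
      (w.take (i + m)).count true + (w.take j).count true + 1 := by
  obtain ⟨L, rfl, hL, hc⟩ := h
  have hchr : ∀ l ∈ L, IsLowerChristoffel l :=
    fun l hl => (hL l hl).1.isLowerChristoffel (hL l hl).2
  have hsorted : L.Pairwise fun a b => density b ≤ density a :=
    (isChain_iff_pairwise.1 (hc.imp fun (a b : List Bool) h => (not_lt.1 h : b ≤ a))).imp_of_mem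
      fun ha hb h => density_le_density_of_le (hchr _ ha) (hchr _ hb) h
  have hconc := polyline_add_sub_le hsorted hij m
  obtain ⟨hi₁, hi₂⟩ := count_take_le_polyline hchr (x := i) (by omega)
  obtain ⟨hj₁, hj₂⟩ := count_take_le_polyline hchr (x := j) (by omega)
  obtain ⟨him₁, him₂⟩ := count_take_le_polyline hchr (x := i + m) (by omega)
  obtain ⟨hjm₁, hjm₂⟩ := count_take_le_polyline hchr (x := j + m) (by omega)
  have : ((L.flatten.take (j + m)).count true + (L.flatten.take i).count true : ℚ) <
      (L.flatten.take (i + m)).count true + (L.flatten.take j).count true + 2 := by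
    linarith
  exact Nat.le_of_lt_succ (by exact_mod_cast this)

theorem DCdown.count_take_add_le {w : List Bool} (h : DCdown w) {i j m : ℕ} (hij : i ≤ j)
    (hjm : j + m ≤ w.length) :
    (w.take (i + m)).count true + (w.take j).count true ≤
      (w.take (j + m)).count true + (w.take i).count true + 1 := by
  have hdc := (dcDown_iff_dc_map_not.1 h).count_take_add_le hij (by simpa using hjm)
  have hcompl : ∀ x ≤ w.length, ((w.map not).take x).count true + (w.take x).count true = x := by
    intro x hx
    rw [← map_take, count_true_map_not, count_false_add_count_true, length_take_of_le hx]
  have := hcompl i (by omega)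
  have := hcompl j (by omega)
  have := hcompl (i + m) (by omega)
  have := hcompl (j + m) (by omega)
  omega

theorem exists_count_take_of_infix {u w : List Bool} (h : u <:+: w) :
    ∃ i, i + u.length ≤ w.length ∧
      (w.take (i + u.length)).count true = (w.take i).count true + u.count true := by
  obtain ⟨s, t, rfl⟩ := h
  refine ⟨s.length, by simp, ?_⟩
  rw [← length_append, append_assoc, take_left, ← append_assoc, take_left, count_append]

/-- A binary word is balanced iff it is both upward and downward digitally convex. -/
theorem stmt12 (w : List Bool) : Balanced01 w ↔ DC w ∧ DCdown w := by
  refine ⟨fun h => ⟨h.dc, h.dcDown⟩, fun ⟨hdc, hdown⟩ u v hu hv hlen => ?_⟩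
  obtain ⟨i, hi, hcu⟩ := exists_count_take_of_infix hu
  obtain ⟨j, hj, hcv⟩ := exists_count_take_of_infix hv
  rw [hlen] at hi hcu
  rcases le_total i j with hij | hji
  · have := hdown.count_take_add_le hij hj
    omega
  · have := hdc.count_take_add_le hji hi
    omega
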